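/- arXiv:2404.05812 — 5 statements merged into one kernel-verified Lean document; each statement's English description precedes it below -/
import Mathlib

section
/- For every t > 0 and every x ∈ ℝ³, ∫_{ℝ³} dy / (|y|² (1 + t + |x − y|)³) ≤ 7π / t². -/
/-!
Split `ℝ³` according to whether `|y| ≤ 1 + t + |x - y|`. Where this holds,
`1 + t + |x - y| ≥ max t |y|`, so the kernel is at most `1 / (|y|² max(t, |y|)³)`, whose
integral is `6π / t²`. Where it fails, `|y| ≥ t + |x - y|`, so the kernel is at most
`(t + |x - y|)⁻⁵`, whose integral is `π / (3 t²)`. Both majorants are radial (about `0`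
and about `x`), so their integrals reduce in polar coordinates to explicit integrals over
`(0, ∞)`, and `6 + 1/3 ≤ 7`.
-/

open MeasureTheory Real Set Filter

namespace EuclideanSpace

variable {F : Type*} [NormedAddCommGroup F] [NormedSpace ℝ F]

theorem integrable_fun_norm_fin_three {f : ℝ → F} :
    Integrable (fun y : EuclideanSpace ℝ (Fin 3) => f ‖y‖) ↔
      IntegrableOn (fun r : ℝ => r ^ 2 • f r) (Ioi 0) := by
  simpa using
    integrable_fun_norm_addHaar (volume : Measure (EuclideanSpace ℝ (Fin 3))) (f := f)

theorem integral_fun_norm_fin_three (f : ℝ → F) :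
    ∫ y : EuclideanSpace ℝ (Fin 3), f ‖y‖ =
      (4 * π) • ∫ r in Ioi (0 : ℝ), r ^ 2 • f r := by
  rw [integral_fun_norm_addHaar, measureReal_def, volume_ball_fin_three]
  simp only [finrank_euclideanSpace_fin, ENNReal.ofReal_one, one_pow, one_mul,
    ENNReal.toReal_ofReal (by positivity : 0 ≤ π * 4 / 3), ← Nat.cast_smul_eq_nsmul ℝ,
    smul_smul]
  norm_num
  ring_nf

end EuclideanSpace

section Radial

variable {t : ℝ}

theorem eqOn_inv_max_pow_three_Ioi (ht : 0 < t) :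
    EqOn (fun r : ℝ => (max t r ^ 3)⁻¹) (fun r => r ^ (-3 : ℝ)) (Ioi t) := fun r hr => by
  dsimp only
  rw [max_eq_right (le_of_lt hr), rpow_neg (ht.trans hr).le, ← rpow_natCast]
  norm_num

theorem integrableOn_Ioi_inv_max_pow_three (ht : 0 < t) :
    IntegrableOn (fun r : ℝ => (max t r ^ 3)⁻¹) (Ioi 0) := by
  rw [← Ioc_union_Ioi_eq_Ioi ht.le]
  refine .union ?_ ((integrableOn_Ioi_rpow_of_lt (by norm_num) ht).congr_fun
    (eqOn_inv_max_pow_three_Ioi ht).symm measurableSet_Ioi)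
  exact (continuous_const.max continuous_id).pow 3
    |>.inv₀ (fun _ => (pow_pos (lt_max_of_lt_left ht) 3).ne')
    |>.integrableOn_Icc.mono_set Ioc_subset_Icc_self

theorem integral_Ioi_inv_max_pow_three (ht : 0 < t) :
    ∫ r in Ioi 0, (max t r ^ 3)⁻¹ = 3 / (2 * t ^ 2) := by
  have hIoc : EqOn (fun r : ℝ => (max t r ^ 3)⁻¹) (fun _ => (t ^ 3)⁻¹) (Ioc 0 t) :=
    fun r hr => by dsimp only; rw [max_eq_left hr.2]
  have hint := integrableOn_Ioi_inv_max_pow_three ht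
  rw [← Ioc_union_Ioi_eq_Ioi ht.le] at hint ⊢
  rw [setIntegral_union (Ioc_disjoint_Ioi le_rfl) measurableSet_Ioi
      (hint.mono_set subset_union_left) (hint.mono_set subset_union_right),
    setIntegral_congr_fun measurableSet_Ioc hIoc,
    setIntegral_congr_fun measurableSet_Ioi (eqOn_inv_max_pow_three_Ioi ht),
    setIntegral_const, integral_Ioi_rpow_of_lt (by norm_num) ht,
    volume_real_Ioc_of_le ht.le, smul_eq_mul, show (-3 : ℝ) + 1 = -(2 : ℕ) by norm_num,
    rpow_neg ht.le, rpow_natCast]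
  field_simp
  ring

-- Expand `r ^ 2 = ((t + r) - t) ^ 2` and integrate term by term.
theorem hasDerivAt_sq_mul_inv_add_pow_five_antideriv (ht : 0 < t) {r : ℝ} (hr : 0 ≤ r) :
    HasDerivAt (fun s : ℝ => -(2⁻¹ * ((t + s) ^ 2)⁻¹) + 2 * t / 3 * ((t + s) ^ 3)⁻¹
        - t ^ 2 / 4 * ((t + s) ^ 4)⁻¹)
      (r ^ 2 * ((t + r) ^ 5)⁻¹) r := by
  have hne : t + r ≠ 0 := by positivity
  have hlin : HasDerivAt (fun s : ℝ => t + s) 1 r := (hasDerivAt_id r).const_add t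
  have hpow (n : ℕ) := (hlin.pow n).inv (pow_ne_zero n hne)
  refine ((((hpow 2).const_mul 2⁻¹).neg.add ((hpow 3).const_mul (2 * t / 3))).sub
    ((hpow 4).const_mul (t ^ 2 / 4))).congr_deriv ?_
  simp only [Pi.pow_apply]
  field_simp
  ring

theorem tendsto_sq_mul_inv_add_pow_five_antideriv :
    Tendsto (fun s : ℝ => -(2⁻¹ * ((t + s) ^ 2)⁻¹) + 2 * t / 3 * ((t + s) ^ 3)⁻¹
        - t ^ 2 / 4 * ((t + s) ^ 4)⁻¹) atTop (nhds 0) := by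
  have hinv {n : ℕ} (hn : n ≠ 0) : Tendsto (fun s : ℝ => ((t + s) ^ n)⁻¹) atTop (nhds 0) :=
    ((tendsto_pow_atTop hn).comp (tendsto_atTop_add_const_left _ t tendsto_id)).inv_tendsto_atTop
  simpa using (((hinv two_ne_zero).const_mul 2⁻¹).neg.add
    ((hinv three_ne_zero).const_mul (2 * t / 3))).sub ((hinv four_ne_zero).const_mul (t ^ 2 / 4))

theorem sq_mul_inv_add_pow_five_nonneg (ht : 0 < t) {r : ℝ} (hr : r ∈ Ioi 0) :
    0 ≤ r ^ 2 * ((t + r) ^ 5)⁻¹ := by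
  have : 0 < r := hr
  positivity

theorem integrableOn_Ioi_sq_mul_inv_add_pow_five (ht : 0 < t) :
    IntegrableOn (fun r : ℝ => r ^ 2 * ((t + r) ^ 5)⁻¹) (Ioi 0) :=
  integrableOn_Ioi_deriv_of_nonneg'
    (fun _ hr => hasDerivAt_sq_mul_inv_add_pow_five_antideriv ht hr)
    (fun _ hr => sq_mul_inv_add_pow_five_nonneg ht hr) tendsto_sq_mul_inv_add_pow_five_antideriv

theorem integral_Ioi_sq_mul_inv_add_pow_five (ht : 0 < t) :
    ∫ r in Ioi 0, r ^ 2 * ((t + r) ^ 5)⁻¹ = 1 / (12 * t ^ 2) := by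
  rw [integral_Ioi_of_hasDerivAt_of_nonneg'
    (fun _ hr => hasDerivAt_sq_mul_inv_add_pow_five_antideriv ht hr)
    (fun _ hr => sq_mul_inv_add_pow_five_nonneg ht hr) tendsto_sq_mul_inv_add_pow_five_antideriv]
  field_simp
  ring

end Radial

theorem one_div_sq_mul_pow_three_le {t s u : ℝ} (r : ℝ) (ht : 0 < t) (hs : 0 ≤ s)
    (hu : t + s ≤ u) :
    1 / (r ^ 2 * u ^ 3) ≤ (r ^ 2 * max t r ^ 3)⁻¹ + ((t + s) ^ 5)⁻¹ := by
  rcases eq_or_ne r 0 with rfl | hr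
  · simp only [zero_pow two_ne_zero, zero_mul, div_zero, inv_zero, zero_add]
    positivity
  rw [one_div]
  by_cases hru : r ≤ u
  · have hmax : r ^ 2 * max t r ^ 3 ≤ r ^ 2 * u ^ 3 := by
      gcongr
      exact max_le (by linarith) hru
    have := inv_anti₀ (by positivity) hmax
    have : 0 ≤ ((t + s) ^ 5)⁻¹ := by positivity
    linarith
  · have hlow : (t + s) ^ 5 ≤ r ^ 2 * u ^ 3 := by
      have hr' : t + s ≤ |r| := hu.trans ((not_le.1 hru).le.trans (le_abs_self r))
      calc (t + s) ^ 5 = (t + s) ^ 2 * (t + s) ^ 3 := by ring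
        _ ≤ |r| ^ 2 * u ^ 3 := by gcongr
        _ = r ^ 2 * u ^ 3 := by rw [sq_abs]
    have := inv_anti₀ (by positivity) hlow
    have : 0 ≤ (r ^ 2 * max t r ^ 3)⁻¹ := by positivity
    linarith

section Majorants

variable {t : ℝ}

theorem eqOn_sq_smul_inv_sq_mul_max_pow_three :
    EqOn (fun r : ℝ => r ^ 2 • (r ^ 2 * max t r ^ 3)⁻¹) (fun r => (max t r ^ 3)⁻¹)
      (Ioi 0) :=
  fun r (hr : 0 < r) => by
    simp only [smul_eq_mul, mul_inv, ← mul_assoc, mul_inv_cancel₀ (pow_ne_zero 2 hr.ne'),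
      one_mul]

theorem integrable_inv_norm_sq_mul_max_pow_three (ht : 0 < t) :
    Integrable fun y : EuclideanSpace ℝ (Fin 3) => (‖y‖ ^ 2 * max t ‖y‖ ^ 3)⁻¹ :=
  (EuclideanSpace.integrable_fun_norm_fin_three
    (f := fun r => (r ^ 2 * max t r ^ 3)⁻¹)).2 <|
    (integrableOn_Ioi_inv_max_pow_three ht).congr_fun
      eqOn_sq_smul_inv_sq_mul_max_pow_three.symm measurableSet_Ioi

theorem integral_inv_norm_sq_mul_max_pow_three (ht : 0 < t) :
    ∫ y : EuclideanSpace ℝ (Fin 3), (‖y‖ ^ 2 * max t ‖y‖ ^ 3)⁻¹ = 6 * π / t ^ 2 := by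
  rw [EuclideanSpace.integral_fun_norm_fin_three fun r => (r ^ 2 * max t r ^ 3)⁻¹,
    setIntegral_congr_fun measurableSet_Ioi eqOn_sq_smul_inv_sq_mul_max_pow_three,
    integral_Ioi_inv_max_pow_three ht, smul_eq_mul]
  field_simp
  ring

theorem integrable_inv_add_norm_pow_five (ht : 0 < t) :
    Integrable fun y : EuclideanSpace ℝ (Fin 3) => ((t + ‖y‖) ^ 5)⁻¹ :=
  (EuclideanSpace.integrable_fun_norm_fin_three (f := fun r => ((t + r) ^ 5)⁻¹)).2 <| by
    simpa only [smul_eq_mul] using integrableOn_Ioi_sq_mul_inv_add_pow_five ht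

theorem integral_inv_add_norm_pow_five (ht : 0 < t) :
    ∫ y : EuclideanSpace ℝ (Fin 3), ((t + ‖y‖) ^ 5)⁻¹ = π / (3 * t ^ 2) := by
  rw [EuclideanSpace.integral_fun_norm_fin_three fun r => ((t + r) ^ 5)⁻¹]
  simp only [smul_eq_mul]
  rw [integral_Ioi_sq_mul_inv_add_pow_five ht]
  field_simp
  ring

end Majorants

/-- For every `t > 0` and every `x ∈ ℝ³`,
`∫_{ℝ³} dy / (|y|² (1 + t + |x − y|)³) ≤ 7π / t²`. -/
theorem kernel_time_decay_bound :
    ∀ t : ℝ, 0 < t → ∀ x : EuclideanSpace ℝ (Fin 3),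
      (∫ y : EuclideanSpace ℝ (Fin 3),
          1 / (‖y‖ ^ 2 * (1 + t + ‖x - y‖) ^ 3)) ≤ 7 * Real.pi / t ^ 2 := by
  intro t ht x
  have hnear := integrable_inv_norm_sq_mul_max_pow_three ht
  have hfar := (integrable_inv_add_norm_pow_five ht).comp_sub_right x
  calc (∫ y : EuclideanSpace ℝ (Fin 3), 1 / (‖y‖ ^ 2 * (1 + t + ‖x - y‖) ^ 3))
      ≤ ∫ y, ((‖y‖ ^ 2 * max t ‖y‖ ^ 3)⁻¹ + ((t + ‖y - x‖) ^ 5)⁻¹) := by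
        refine integral_mono_of_nonneg (.of_forall fun y => by positivity) (hnear.add hfar)
          (.of_forall fun y => ?_)
        exact one_div_sq_mul_pow_three_le ‖y‖ ht (norm_nonneg (y - x))
          (by rw [norm_sub_rev]; linarith)
    _ = 6 * π / t ^ 2 + π / (3 * t ^ 2) := by
        rw [integral_add hnear hfar,
          integral_sub_right_eq_self (fun y => ((t + ‖y‖) ^ 5)⁻¹) x,
          integral_inv_norm_sq_mul_max_pow_three ht, integral_inv_add_norm_pow_five ht]
    _ ≤ 7 * π / t ^ 2 := by
        field_simp
        nlinarith [pi_pos]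
end

section
/- Let g : ℝ³ × ℝ³ → ℝ be C¹ with sup_{x,v} ⟨x⟩⁵(|g| + |∇_v g|) < ∞, and let φ ∈ C_c^∞(ℝ³ × ℝ³). Then there is a constant C (depending on φ) such that for all t ≥ 2, | ∫_{ℝ³×ℝ³} t³ g(x − vt, v) φ(x,v) dx dv − ∫_{ℝ³} φ(x, x/t) ∫_{ℝ³} g(y, x/t) dy dx | ≤ (C/t) sup_{x,v} ⟨x⟩⁵(|g| + |∇_v g|)(x,v). -/
open MeasureTheory Real

abbrev E3 := EuclideanSpace ℝ (Fin 3)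

lemma E3_finrank : Module.finrank ℝ E3 = 3 := by simp [finrank_euclideanSpace]

lemma w_ge_one (y : E3) : 1 ≤ Real.sqrt (1 + ‖y‖ ^ 2) :=
  Real.one_le_sqrt.2 (by nlinarith [norm_nonneg y, sq_nonneg ‖y‖])

lemma w_ge_norm (y : E3) : ‖y‖ ≤ Real.sqrt (1 + ‖y‖ ^ 2) := by
  have h := Real.sqrt_le_sqrt (show ‖y‖^2 ≤ 1+‖y‖^2 by linarith)
  rwa [Real.sqrt_sq (norm_nonneg y)] at h

lemma w_pos (y : E3) : 0 < Real.sqrt (1 + ‖y‖ ^ 2) := lt_of_lt_of_le one_pos (w_ge_one y)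

lemma decay_bound (y : E3) :
    ‖y‖ / Real.sqrt (1 + ‖y‖ ^ 2) ^ 5 ≤ 16 * (1 + ‖y‖) ^ (-(4:ℝ)) := by
  set w := Real.sqrt (1 + ‖y‖ ^ 2) with hw
  have h1 : (1:ℝ) ≤ w := w_ge_one y
  have h2 : ‖y‖ ≤ w := w_ge_norm y
  have h3 : 1 + ‖y‖ ≤ 2 * w := by linarith
  have hy : (0:ℝ) < 1 + ‖y‖ := by positivity
  have hr : (1 + ‖y‖) ^ (-(4:ℝ)) = ((1 + ‖y‖) ^ (4:ℕ))⁻¹ := by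
    rw [Real.rpow_neg hy.le, ← Real.rpow_natCast (1 + ‖y‖) 4]
    norm_num
  rw [hr, div_le_iff₀ (by positivity),
    show (16:ℝ) * ((1+‖y‖)^(4:ℕ))⁻¹ * w^5 = 16*w^5/(1+‖y‖)^(4:ℕ) by ring,
    le_div_iff₀ (by positivity)]
  have h4 : (1 + ‖y‖)^(4:ℕ) ≤ (2*w)^(4:ℕ) := pow_le_pow_left₀ hy.le h3 4
  calc ‖y‖ * (1 + ‖y‖)^(4:ℕ) ≤ w * (2*w)^(4:ℕ) :=
        mul_le_mul h2 h4 (by positivity) (by linarith)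
    _ = 16 * w^5 := by ring

-- fderiv in second variable of φ, norm bound via full fderiv
lemma fderiv_snd_eq (f : E3 × E3 → ℝ) (hf : ContDiff ℝ 1 f) (x v : E3) :
    fderiv ℝ (fun w => f (x, w)) v
      = (fderiv ℝ f (x, v)).comp (ContinuousLinearMap.inr ℝ E3 E3) := by
  have h1 : HasFDerivAt f (fderiv ℝ f (x, v)) (x, v) :=
    (hf.differentiable one_ne_zero (x, v)).hasFDerivAt
  have h2 : HasFDerivAt (fun w : E3 => (x, w)) (ContinuousLinearMap.inr ℝ E3 E3) v :=
    hasFDerivAt_prodMk_right x v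
  exact (h1.comp v h2).fderiv

lemma norm_fderiv_snd_le (f : E3 × E3 → ℝ) (hf : ContDiff ℝ 1 f) (x v : E3) :
    ‖fderiv ℝ (fun w => f (x, w)) v‖ ≤ ‖fderiv ℝ f (x, v)‖ := by
  rw [fderiv_snd_eq f hf x v]
  refine ContinuousLinearMap.opNorm_le_bound _ (norm_nonneg _) fun u => ?_
  calc ‖(fderiv ℝ f (x, v)) ((ContinuousLinearMap.inr ℝ E3 E3) u)‖
      ≤ ‖fderiv ℝ f (x, v)‖ * ‖(ContinuousLinearMap.inr ℝ E3 E3) u‖ :=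
        ContinuousLinearMap.le_opNorm _ _
    _ ≤ ‖fderiv ℝ f (x, v)‖ * ‖u‖ := by
        apply mul_le_mul_of_nonneg_left _ (norm_nonneg _)
        simp [Prod.norm_def]

-- MVT estimate for v ↦ g(y,v) * φ(x,v)
lemma mvt_bound (g φ : E3 × E3 → ℝ) (hg : ContDiff ℝ 1 g) (hφ : ContDiff ℝ (⊤ : ℕ∞) φ)
    (x y : E3) (Cg Cφ Cφ' : ℝ)
    (hCg : ∀ v, |g (y, v)| + ‖fderiv ℝ (fun w => g (y, w)) v‖ ≤ Cg)
    (hCφ : ∀ v, |φ (x, v)| ≤ Cφ) (hCφ' : ∀ v, ‖fderiv ℝ (fun w => φ (x, w)) v‖ ≤ Cφ')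
    (a b : E3) :
    |g (y, a) * φ (x, a) - g (y, b) * φ (x, b)| ≤ (Cφ + Cφ') * Cg * ‖a - b‖ := by
  set h : E3 → ℝ := fun v => g (y, v) * φ (x, v) with hh
  have hgd : ∀ v : E3, DifferentiableAt ℝ (fun w => g (y, w)) v := fun v =>
    (hg.differentiable one_ne_zero (y, v)).comp v ((differentiableAt_const y).prodMk differentiableAt_id)
  have hφd : ∀ v : E3, DifferentiableAt ℝ (fun w => φ (x, w)) v := fun v =>
    (hφ.differentiable (by simp) (x, v)).comp v ((differentiableAt_const x).prodMk differentiableAt_id)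
  have hd : ∀ v ∈ (Set.univ : Set E3), DifferentiableAt ℝ h v := fun v _ =>
    (hgd v).mul (hφd v)
  have hbound : ∀ v ∈ (Set.univ : Set E3), ‖fderiv ℝ h v‖ ≤ (Cφ + Cφ') * Cg := by
    intro v _
    rw [hh, fderiv_fun_mul (hgd v) (hφd v)]
    have e1 : ‖g (y, v) • fderiv ℝ (fun w => φ (x, w)) v‖ ≤ Cg * Cφ' := by
      rw [norm_smul]
      have h1 : |g (y,v)| ≤ Cg := le_trans (le_add_of_nonneg_right (norm_nonneg _)) (hCg v)
      exact mul_le_mul h1 (hCφ' v) (norm_nonneg _)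
        (le_trans (abs_nonneg _) h1)
    have e2 : ‖φ (x, v) • fderiv ℝ (fun w => g (y, w)) v‖ ≤ Cφ * Cg := by
      rw [norm_smul]
      have h2 : ‖fderiv ℝ (fun w => g (y, w)) v‖ ≤ Cg :=
        le_trans (le_add_of_nonneg_left (abs_nonneg _)) (hCg v)
      exact mul_le_mul (hCφ v) h2 (norm_nonneg _)
        (le_trans (abs_nonneg _) (hCφ v))
    calc ‖g (y, v) • fderiv ℝ (fun w => φ (x, w)) v + φ (x, v) • fderiv ℝ (fun w => g (y, w)) v‖
        ≤ Cg * Cφ' + Cφ * Cg := le_trans (norm_add_le _ _) (add_le_add e1 e2)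
      _ = (Cφ + Cφ') * Cg := by ring
  have := (convex_univ : Convex ℝ (Set.univ : Set E3)).norm_image_sub_le_of_norm_fderiv_le
    hd hbound (Set.mem_univ b) (Set.mem_univ a)
  simpa [hh, Real.norm_eq_abs] using this

-- change of variables in v for fixed x
lemma inner_cov (g φ : E3 × E3 → ℝ) (x : E3) {t : ℝ} (ht : 0 < t) :
    ∫ v : E3, t ^ 3 * g (x - t • v, v) * φ (x, v)
      = ∫ y : E3, g (y, (1/t) • (x - y)) * φ (x, (1/t) • (x - y)) := by
  set P : E3 → ℝ := fun y => g (y, (1/t) • (x - y)) * φ (x, (1/t) • (x - y)) with hP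
  have key : ∀ v : E3, g (x - t • v, v) * φ (x, v) = P (x - t • v) := by
    intro v
    have : (1/t) • (x - (x - t • v)) = v := by
      rw [sub_sub_cancel, smul_smul, one_div_mul_cancel ht.ne', one_smul]
    simp only [hP, sub_sub_cancel, smul_smul, one_div]
    rw [inv_mul_cancel₀ ht.ne', one_smul]
  calc ∫ v : E3, t ^ 3 * g (x - t • v, v) * φ (x, v)
      = ∫ v : E3, t ^ 3 * P (x - t • v) := by
        simp_rw [mul_assoc, key]
    _ = t ^ 3 * ∫ v : E3, P (x - t • v) := integral_const_mul _ _
    _ = t ^ 3 * ∫ v : E3, P (x + t • v) := by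
        rw [← integral_neg_eq_self (fun v : E3 => P (x + t • v)) volume]
        simp_rw [smul_neg, ← sub_eq_add_neg]
    _ = t ^ 3 * ∫ v : E3, (fun w => P (x + w)) (t • v) := by norm_num
    _ = t ^ 3 * (|(t ^ Module.finrank ℝ E3)⁻¹| • ∫ w : E3, P (x + w)) := by
        rw [MeasureTheory.Measure.integral_comp_smul volume (fun w => P (x + w)) t]
    _ = t ^ 3 * (t ^ 3)⁻¹ * ∫ w : E3, P w := by
        rw [integral_add_left_eq_self P x, E3_finrank, smul_eq_mul,
          abs_of_nonneg (by positivity), mul_assoc]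
    _ = ∫ y : E3, P y := by
        rw [mul_inv_cancel₀ (by positivity), one_mul]

lemma decay_bound' (y : E3) :
    (Real.sqrt (1 + ‖y‖ ^ 2) ^ 5)⁻¹ ≤ 16 * (1 + ‖y‖) ^ (-(4:ℝ)) := by
  set w := Real.sqrt (1 + ‖y‖ ^ 2) with hw
  have h1 : (1:ℝ) ≤ w := w_ge_one y
  have h2 : ‖y‖ ≤ w := w_ge_norm y
  have hy : (0:ℝ) < 1 + ‖y‖ := by positivity
  have hr : (1 + ‖y‖) ^ (-(4:ℝ)) = ((1 + ‖y‖) ^ (4:ℕ))⁻¹ := by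
    rw [Real.rpow_neg hy.le, ← Real.rpow_natCast (1 + ‖y‖) 4]
    norm_num
  rw [hr, show ((w^5)⁻¹ : ℝ) = 1 / w^5 by ring,
    show (16:ℝ) * ((1+‖y‖)^(4:ℕ))⁻¹ = 16 / (1+‖y‖)^(4:ℕ) by ring,
    div_le_div_iff₀ (by positivity) (by positivity), one_mul]
  calc (1 + ‖y‖)^(4:ℕ) ≤ (2*w)^(4:ℕ) := pow_le_pow_left₀ hy.le (by linarith) 4
    _ = 16 * w^4 := by ring
    _ ≤ 16 * w^5 :=
        mul_le_mul_of_nonneg_left (pow_le_pow_right₀ h1 (by norm_num)) (by norm_num)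

/-- Quantitative approximation of the weak-convergence pairing: for `g` of class `C¹` with
`sup ⟨x⟩⁵(|g| + |∇ᵥ g|) ≤ M` and a compactly supported test function `φ`, there is a
constant `C` (depending on `φ`) such that for all `t ≥ 2`,
`|∫∫ t³ g(x−vt,v)φ(x,v) − ∫ φ(x,x/t) ∫ g(y,x/t) dy dx| ≤ (C/t) M`. -/
theorem weak_convergence_approximation (φ : E3 × E3 → ℝ)
    (hφ : ContDiff ℝ (⊤ : ℕ∞) φ) (hsupp : HasCompactSupport φ) :
    ∃ C : ℝ,
      ∀ g : E3 × E3 → ℝ, ContDiff ℝ 1 g →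
        ∀ M : ℝ,
          (∀ x v : E3,
            Real.sqrt (1 + ‖x‖ ^ 2) ^ 5 *
              (|g (x, v)| + ‖fderiv ℝ (fun w => g (x, w)) v‖) ≤ M) →
          ∀ t : ℝ, 2 ≤ t →
            |(∫ p : E3 × E3, t ^ 3 * g (p.1 - t • p.2, p.2) * φ p)
              - ∫ x : E3, φ (x, (1 / t) • x) * ∫ y : E3, g (y, (1 / t) • x)|
            ≤ (C / t) * M := by
  classical
  obtain ⟨A, hA⟩ := hsupp.exists_bound_of_continuous hφ.continuous
  obtain ⟨B, hB⟩ := (hsupp.fderiv ℝ).exists_bound_of_continuous (hφ.continuous_fderiv (by simp))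
  have hA0 : 0 ≤ A := le_trans (norm_nonneg _) (hA 0)
  have hB0 : 0 ≤ B := le_trans (norm_nonneg _) (hB 0)
  set K1 : Set E3 := Prod.fst '' tsupport φ with hK1
  have hK1c : IsCompact K1 := hsupp.image continuous_fst
  have hK1m : MeasurableSet K1 := hK1c.isClosed.measurableSet
  set I4 : ℝ := ∫ y : E3, (1 + ‖y‖) ^ (-(4:ℝ)) with hI4
  have hI4int : Integrable (fun y : E3 => (1 + ‖y‖) ^ (-(4:ℝ))) :=
    integrable_one_add_norm (by rw [E3_finrank]; norm_num)
  refine ⟨(volume K1).toReal * ((A + B) * (16 * I4)), ?_⟩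
  intro g hg M hM t ht
  have ht0 : (0:ℝ) < t := lt_of_lt_of_le two_pos ht
  have hM0 : 0 ≤ M := le_trans (by positivity) (hM 0 0)
  -- decay of g
  have hgdecay : ∀ y v : E3, |g (y, v)| + ‖fderiv ℝ (fun w => g (y, w)) v‖
      ≤ M / Real.sqrt (1 + ‖y‖ ^ 2) ^ 5 := by
    intro y v
    rw [le_div_iff₀ (by positivity)]
    rw [mul_comm]
    exact hM y v
  -- integrable dominating function for g slices
  set bnd : E3 → ℝ := fun y => M * (16 * (1 + ‖y‖) ^ (-(4:ℝ))) with hbnd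
  have hbnd_int : Integrable bnd := (hI4int.const_mul 16).const_mul M
  have hg_le_bnd : ∀ y v : E3, |g (y, v)| ≤ bnd y := by
    intro y v
    have h1 : |g (y, v)| ≤ M / Real.sqrt (1 + ‖y‖ ^ 2) ^ 5 :=
      le_trans (le_add_of_nonneg_right (norm_nonneg _)) (hgdecay y v)
    calc |g (y, v)| ≤ M / Real.sqrt (1 + ‖y‖ ^ 2) ^ 5 := h1
      _ = M * (Real.sqrt (1 + ‖y‖ ^ 2) ^ 5)⁻¹ := by ring
      _ ≤ M * (16 * (1 + ‖y‖) ^ (-(4:ℝ))) :=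
          mul_le_mul_of_nonneg_left (decay_bound' y) hM0
  have hg_slice_cont : ∀ v : E3, Continuous (fun y : E3 => g (y, v)) := fun v =>
    hg.continuous.comp (continuous_id.prodMk continuous_const)
  have hg_int : ∀ v : E3, Integrable (fun y : E3 => g (y, v)) := by
    intro v
    refine hbnd_int.mono' (hg_slice_cont v).aestronglyMeasurable ?_
    filter_upwards with y
    rw [Real.norm_eq_abs]
    exact hg_le_bnd y v
  -- the full integrand on the product space
  set Ffun : E3 × E3 → ℝ := fun p => t ^ 3 * g (p.1 - t • p.2, p.2) * φ p with hFfun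
  have hFcont : Continuous Ffun := by
    apply Continuous.mul _ hφ.continuous
    exact continuous_const.mul (hg.continuous.comp
      ((continuous_fst.sub ((continuous_const_smul t).comp continuous_snd)).prodMk continuous_snd))
  have hFsupp : HasCompactSupport Ffun := by
    apply hsupp.mono
    intro p hp
    simp only [hFfun, Function.mem_support, ne_eq] at hp ⊢
    intro h
    exact hp (by rw [h, mul_zero])
  have hFint : Integrable Ffun := hFcont.integrable_of_hasCompactSupport hFsupp
  -- f1 and f2
  set f1 : E3 → ℝ := fun x => ∫ v : E3, t ^ 3 * g (x - t • v, v) * φ (x, v) with hf1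
  set f2 : E3 → ℝ := fun x => φ (x, (1 / t) • x) * ∫ y : E3, g (y, (1 / t) • x) with hf2
  have hFprod : Integrable Ffun ((volume : Measure E3).prod volume) := by
    rwa [← MeasureTheory.Measure.volume_eq_prod]
  have hFeq : (∫ p : E3 × E3, t ^ 3 * g (p.1 - t • p.2, p.2) * φ p) = ∫ x, f1 x := by
    calc (∫ p : E3 × E3, Ffun p)
        = ∫ p, Ffun p ∂((volume : Measure E3).prod volume) := by
          rw [← MeasureTheory.Measure.volume_eq_prod]
      _ = ∫ x, ∫ v, Ffun (x, v) := MeasureTheory.integral_prod Ffun hFprod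
      _ = ∫ x, f1 x := rfl
  have hf1int : Integrable f1 := hFprod.integral_prod_left
  -- continuity and integrability of f2
  have hGcont : Continuous (fun v : E3 => ∫ y : E3, g (y, v)) := by
    refine continuous_of_dominated (bound := bnd)
      (fun v => (hg_slice_cont v).aestronglyMeasurable) ?_ hbnd_int ?_
    · intro v
      filter_upwards with y
      rw [Real.norm_eq_abs]
      exact hg_le_bnd y v
    · filter_upwards with y
      exact hg.continuous.comp (continuous_const.prodMk continuous_id)
  have hf2cont : Continuous f2 := by
    apply Continuous.mul
    · exact hφ.continuous.comp (continuous_id.prodMk (continuous_const_smul _))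
    · exact hGcont.comp (continuous_const_smul _)
  have hf2supp : HasCompactSupport f2 := by
    have hss : Function.support f2 ⊆ K1 := by
      intro x hx
      have hφx : φ (x, (1 / t) • x) ≠ 0 := by
        intro h
        apply hx
        simp only [hf2, h, zero_mul]
      exact ⟨(x, (1 / t) • x), subset_tsupport φ hφx, rfl⟩
    exact hK1c.of_isClosed_subset (isClosed_tsupport f2)
      (closure_minimal hss hK1c.isClosed)
  have hf2int : Integrable f2 := hf2cont.integrable_of_hasCompactSupport hf2supp
  -- pointwise bound on |f1 x - f2 x|
  have hpt : ∀ x : E3, |f1 x - f2 x|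
      ≤ K1.indicator (fun _ => (A + B) * M * (16 * I4) / t) x := by
    intro x
    by_cases hx : x ∈ K1
    · rw [Set.indicator_of_mem hx]
      set Q : E3 → ℝ := fun y => g (y, (1/t) • (x - y)) * φ (x, (1/t) • (x - y)) with hQ
      set R : E3 → ℝ := fun y => g (y, (1/t) • x) * φ (x, (1/t) • x) with hR
      have h1 : f1 x = ∫ y, Q y := inner_cov g φ x ht0
      have h2 : f2 x = ∫ y, R y := by
        simp only [hf2, hR]
        rw [MeasureTheory.integral_mul_const]
        ring
      have hQcont : Continuous Q := by
        apply Continuous.mul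
        · exact hg.continuous.comp (continuous_id.prodMk
            (continuous_const_smul _ |>.comp (continuous_const.sub continuous_id)))
        · exact hφ.continuous.comp (continuous_const.prodMk
            (continuous_const_smul _ |>.comp (continuous_const.sub continuous_id)))
      have hQint : Integrable Q := by
        refine (hbnd_int.const_mul A).mono' hQcont.aestronglyMeasurable ?_
        filter_upwards with y
        rw [Real.norm_eq_abs, hQ, abs_mul]
        have hφle : |φ (x, (1/t) • (x - y))| ≤ A := by
          rw [← Real.norm_eq_abs]; exact hA _
        calc |g (y, (1/t) • (x - y))| * |φ (x, (1/t) • (x - y))| ≤ bnd y * A :=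
              mul_le_mul (hg_le_bnd y ((1/t) • (x - y))) hφle (abs_nonneg _)
                (le_trans (abs_nonneg _) (hg_le_bnd y ((1/t) • (x - y))))
          _ = A * bnd y := mul_comm _ _
      have hRint : Integrable R := (hg_int ((1/t) • x)).mul_const _
      have hsub : f1 x - f2 x = ∫ y, (Q y - R y) := by
        rw [h1, h2, MeasureTheory.integral_sub hQint hRint]
      -- pointwise MVT bound on |Q y - R y|
      have hptQR : ∀ y : E3, |Q y - R y| ≤ (A + B) * M * (16 * (1 + ‖y‖) ^ (-(4:ℝ))) / t := by
        intro y
        have hmvt := mvt_bound g φ hg hφ x y (M / Real.sqrt (1 + ‖y‖ ^ 2) ^ 5) A B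
          (fun v => hgdecay y v)
          (fun v => le_trans (le_of_eq (Real.norm_eq_abs _).symm).ge.le (hA (x, v)))
          (fun v => le_trans (norm_fderiv_snd_le φ (hφ.of_le (by simp)) x v) (hB (x, v)))
          ((1/t) • (x - y)) ((1/t) • x)
        have hab : ‖(1/t) • (x - y) - (1/t) • x‖ = ‖y‖ / t := by
          rw [← smul_sub, show x - y - x = -y by abel, norm_smul, norm_neg,
            Real.norm_eq_abs, abs_of_pos (by positivity : (0:ℝ) < 1/t)]
          ring
        calc |Q y - R y| ≤ (A + B) * (M / Real.sqrt (1 + ‖y‖ ^ 2) ^ 5) * (‖y‖ / t) := by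
              simp only [hQ, hR]
              rw [← hab]
              exact hmvt
          _ = (A + B) * (M / t) * (‖y‖ / Real.sqrt (1 + ‖y‖ ^ 2) ^ 5) := by ring
          _ ≤ (A + B) * (M / t) * (16 * (1 + ‖y‖) ^ (-(4:ℝ))) := by
              apply mul_le_mul_of_nonneg_left (decay_bound y) (by positivity)
          _ = (A + B) * M * (16 * (1 + ‖y‖) ^ (-(4:ℝ))) / t := by ring
      have hdomint : Integrable (fun y : E3 => (A + B) * M * (16 * (1 + ‖y‖) ^ (-(4:ℝ))) / t) := by
        have : Integrable (fun y : E3 => ((A + B) * M / t) * (16 * (1 + ‖y‖) ^ (-(4:ℝ)))) :=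
          (hI4int.const_mul 16).const_mul _
        convert this using 2 with y
        ring
      calc |f1 x - f2 x| = |∫ y, (Q y - R y)| := by rw [hsub]
        _ ≤ ∫ y, |Q y - R y| := by
            simpa [Real.norm_eq_abs] using
              norm_integral_le_integral_norm (fun y => Q y - R y)
        _ ≤ ∫ y : E3, (A + B) * M * (16 * (1 + ‖y‖) ^ (-(4:ℝ))) / t :=
            integral_mono (hQint.sub hRint).abs hdomint (fun y => hptQR y)
        _ = (A + B) * M * (16 * I4) / t := by
            rw [show (fun y : E3 => (A + B) * M * (16 * (1 + ‖y‖) ^ (-(4:ℝ))) / t)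
              = fun y : E3 => ((A + B) * M * 16 / t) * ((1 + ‖y‖) ^ (-(4:ℝ))) from
              funext fun y => by ring]
            rw [MeasureTheory.integral_const_mul]
            ring
    · rw [Set.indicator_of_notMem hx]
      have hφ0 : ∀ v : E3, φ (x, v) = 0 := by
        intro v
        by_contra h
        exact hx ⟨(x, v), subset_tsupport φ h, rfl⟩
      have e1 : f1 x = 0 := by
        simp [hf1, hφ0]
      have e2 : f2 x = 0 := by
        simp [hf2, hφ0]
      simp [e1, e2]
  -- indicator integrable and its integral
  have hindint : Integrable (K1.indicator (fun _ : E3 => (A + B) * M * (16 * I4) / t)) :=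
    (integrableOn_const hK1c.measure_lt_top.ne).integrable_indicator hK1m
  have hindval : ∫ x, K1.indicator (fun _ : E3 => (A + B) * M * (16 * I4) / t) x
      = (volume K1).toReal * ((A + B) * M * (16 * I4) / t) := by
    rw [MeasureTheory.integral_indicator_const _ hK1m, smul_eq_mul, measureReal_def]
  -- conclude
  rw [hFeq]
  calc |(∫ x, f1 x) - ∫ x, φ (x, (1 / t) • x) * ∫ y : E3, g (y, (1 / t) • x)|
      = |∫ x, (f1 x - f2 x)| := by rw [MeasureTheory.integral_sub hf1int hf2int]
    _ ≤ ∫ x, |f1 x - f2 x| := by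
        simpa [Real.norm_eq_abs] using norm_integral_le_integral_norm (fun x => f1 x - f2 x)
    _ ≤ ∫ x, K1.indicator (fun _ : E3 => (A + B) * M * (16 * I4) / t) x :=
        integral_mono (hf1int.sub hf2int).abs hindint hpt
    _ = (volume K1).toReal * ((A + B) * M * (16 * I4) / t) := hindval
    _ = ((volume K1).toReal * ((A + B) * (16 * I4)) / t) * M := by ring
end

section
/- Let f be the solution of the free transport equation with regular initial data f₀ satisfying sup_{x,v} ⟨x⟩⁵(|f₀| + |∇_v f₀|) < ∞. Then for every compactly supported smooth test function φ on ℝ³ × ℝ³, lim_{t→∞} ∫_{ℝ³×ℝ³} t³ f(t,x,v) φ(x,v) dx dv = (∫_{ℝ³} f₀(y,0) dy) · ∫_{ℝ³} φ(x,0) dx. That is, t³ f(t,·,·) converges weakly to (∫ f₀(y,0) dy) δ_{v=0}. -/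
open MeasureTheory Real

/-- The solution `f(t,x,v) = f₀(x−vt,v)` of the free transport equation satisfies: for every
compactly supported smooth test function `φ`,
`∫∫ t³ f(t,x,v)φ(x,v) dx dv → (∫ f₀(y,0) dy) ∫ φ(x,0) dx` as `t → ∞`;
that is, `t³ f(t,·,·)` converges weakly to `(∫ f₀(y,0) dy) δ_{v=0}`. -/
theorem concentration_zero_velocity (f₀ : E3 × E3 → ℝ) (hf : ContDiff ℝ 1 f₀)
    (hdec : ∃ M : ℝ, ∀ x v : E3,
      Real.sqrt (1 + ‖x‖ ^ 2) ^ 5 *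
        (|f₀ (x, v)| + ‖fderiv ℝ (fun w => f₀ (x, w)) v‖) ≤ M)
    (φ : E3 × E3 → ℝ) (hφ : ContDiff ℝ (⊤ : ℕ∞) φ) (hsupp : HasCompactSupport φ) :
    Filter.Tendsto
      (fun t : ℝ => ∫ p : E3 × E3, t ^ 3 * f₀ (p.1 - t • p.2, p.2) * φ p)
      Filter.atTop
      (nhds ((∫ y : E3, f₀ (y, 0)) * ∫ x : E3, φ (x, 0))) := by
  classical
  obtain ⟨M, hM⟩ := hdec
  have hfc := hf.continuous
  have hφc := hφ.continuous
  -- the decay weight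
  set h : E3 → ℝ := fun w => ((1 : ℝ) + ‖w‖ ^ 2) ^ (-(5 : ℝ) / 2) with hh_def
  have hhnn : ∀ w : E3, 0 ≤ h w := fun w => Real.rpow_nonneg (by positivity) _
  have hhint : Integrable h := by
    have : ((Module.finrank ℝ E3 : ℝ)) < (5 : ℝ) := by
      simp [finrank_euclideanSpace_fin]; norm_num
    simpa [hh_def] using integrable_rpow_neg_one_add_norm_sq (E := E3) (μ := volume) this
  have hM0 : 0 ≤ M := le_trans (by positivity) (hM 0 0)
  -- key pointwise bound on f₀
  have hkey : ∀ x v : E3, |f₀ (x, v)| ≤ M * h x := by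
    intro x v
    have ha : (0 : ℝ) ≤ 1 + ‖x‖ ^ 2 := by positivity
    have hs : Real.sqrt (1 + ‖x‖ ^ 2) ^ 5 = ((1 : ℝ) + ‖x‖ ^ 2) ^ ((5 : ℝ) / 2) := by
      rw [Real.sqrt_eq_rpow, ← Real.rpow_natCast (((1 : ℝ) + ‖x‖ ^ 2) ^ ((1 : ℝ) / 2)) 5,
        ← Real.rpow_mul ha]
      norm_num
    have h2 := hM x v
    rw [hs] at h2
    have h1 : (0 : ℝ) < ((1 : ℝ) + ‖x‖ ^ 2) ^ ((5 : ℝ) / 2) :=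
      Real.rpow_pos_of_pos (by positivity) _
    have h3 : |f₀ (x, v)| ≤ M / (((1 : ℝ) + ‖x‖ ^ 2) ^ ((5 : ℝ) / 2)) := by
      rw [le_div_iff₀ h1]
      nlinarith [norm_nonneg (fderiv ℝ (fun w => f₀ (x, w)) v), abs_nonneg (f₀ (x, v))]
    have h4 : h x = (((1 : ℝ) + ‖x‖ ^ 2) ^ ((5 : ℝ) / 2))⁻¹ := by
      simp only [hh_def]
      rw [neg_div, Real.rpow_neg ha]
    rw [h4, ← div_eq_mul_inv]
    exact h3
  have hsub : ∀ a b : E3, h (a - b) = h (b - a) := by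
    intro a b
    simp only [hh_def]
    rw [norm_sub_rev]
  -- bound on φ and its support radius
  obtain ⟨C, hC⟩ := hsupp.exists_bound_of_continuous hφc
  have hC0 : 0 ≤ C := le_trans (norm_nonneg _) (hC 0)
  obtain ⟨R, hR0, hRsub⟩ : ∃ R : ℝ, 0 ≤ R ∧ tsupport φ ⊆ Metric.closedBall 0 R := by
    obtain ⟨r, hr⟩ := hsupp.isBounded.subset_closedBall (0 : E3 × E3)
    exact ⟨max r 0, le_max_right _ _,
      hr.trans (Metric.closedBall_subset_closedBall (le_max_left _ _))⟩
  have hφ0 : ∀ x v : E3, R < ‖x‖ → φ (x, v) = 0 := by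
    intro x v hx
    apply image_eq_zero_of_notMem_tsupport
    intro hmem
    have h1 := hRsub hmem
    rw [Metric.mem_closedBall, dist_zero_right] at h1
    exact absurd (le_trans (norm_fst_le (x, v)) h1) (not_le.mpr hx)
  -- the dominating function
  set bound : E3 × E3 → ℝ := fun q =>
    (M * C) * Set.indicator (Metric.closedBall (0 : E3) R) (fun _ => (1 : ℝ)) q.1 * h (q.2 - q.1)
    with hbound_def
  have habs : ∀ (q : E3 × E3) (v : E3), ‖f₀ (q.1 - q.2, v) * φ (q.1, v)‖ ≤ bound q := by
    intro q v
    by_cases hq : q.1 ∈ Metric.closedBall (0 : E3) R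
    · rw [hbound_def]
      simp only [Set.indicator_of_mem hq]
      rw [Real.norm_eq_abs, abs_mul]
      have hφb : |φ (q.1, v)| ≤ C := by
        have := hC (q.1, v); rwa [Real.norm_eq_abs] at this
      calc |f₀ (q.1 - q.2, v)| * |φ (q.1, v)|
          ≤ (M * h (q.1 - q.2)) * C :=
            mul_le_mul (hkey _ _) hφb (abs_nonneg _) (by positivity)
        _ = M * C * 1 * h (q.2 - q.1) := by rw [hsub]; ring
    · have hxR : R < ‖q.1‖ := by
        rw [Metric.mem_closedBall, dist_zero_right, not_le] at hq
        exact hq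
      have hz : φ (q.1, v) = 0 := hφ0 _ _ hxR
      rw [hbound_def]
      simp [hz, Set.indicator_of_notMem hq]
  -- continuity of the rescaled integrands
  have hψc : ∀ t : ℝ,
      Continuous (fun q : E3 × E3 => f₀ (q.1 - q.2, t⁻¹ • q.2) * φ (q.1, t⁻¹ • q.2)) := by
    intro t; fun_prop
  -- the dominating function is integrable
  have hbint : Integrable bound := by
    have h1 : Integrable (fun a : E3 =>
        (M * C) * Set.indicator (Metric.closedBall (0 : E3) R) (fun _ => (1 : ℝ)) a) := by
      refine Integrable.const_mul ?_ _
      rw [integrable_indicator_iff measurableSet_closedBall]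
      exact integrableOn_const measure_closedBall_lt_top.ne
    have h2 : Integrable (fun z : E3 × E3 =>
        ((M * C) * Set.indicator (Metric.closedBall (0 : E3) R) (fun _ => (1 : ℝ)) z.1) * h z.2)
        ((volume : Measure E3).prod volume) := h1.mul_prod hhint
    have hmp := measurePreserving_prod_sub (volume : Measure E3) volume
    have h3 := (hmp.integrable_comp h2.aestronglyMeasurable).2 h2
    rw [Measure.volume_eq_prod]
    exact h3
  -- Step 1: change of variables, valid for t ≥ 1
  have step1 : ∀ t : ℝ, 1 ≤ t →
      (∫ p : E3 × E3, t ^ 3 * f₀ (p.1 - t • p.2, p.2) * φ p)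
        = ∫ q : E3 × E3, f₀ (q.1 - q.2, t⁻¹ • q.2) * φ (q.1, t⁻¹ • q.2) := by
    intro t ht
    have ht0 : (0 : ℝ) < t := lt_of_lt_of_le one_pos ht
    have hFc : Continuous (fun p : E3 × E3 => t ^ 3 * f₀ (p.1 - t • p.2, p.2) * φ p) := by
      fun_prop
    have hFsupp : HasCompactSupport
        (fun p : E3 × E3 => t ^ 3 * f₀ (p.1 - t • p.2, p.2) * φ p) := hsupp.mul_left
    have hFi : Integrable (fun p : E3 × E3 => t ^ 3 * f₀ (p.1 - t • p.2, p.2) * φ p)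
        ((volume : Measure E3).prod volume) := by
      rw [← Measure.volume_eq_prod]
      exact hFc.integrable_of_hasCompactSupport hFsupp
    have hψsupp : HasCompactSupport
        (fun q : E3 × E3 => f₀ (q.1 - q.2, t⁻¹ • q.2) * φ (q.1, t⁻¹ • q.2)) := by
      apply HasCompactSupport.intro (isCompact_closedBall (0 : E3 × E3) (R + t * R))
      intro q hq
      have hz : φ (q.1, t⁻¹ • q.2) = 0 := by
        apply image_eq_zero_of_notMem_tsupport
        intro hmem
        have h1 := hRsub hmem
        rw [Metric.mem_closedBall, dist_zero_right] at h1
        have h2 : ‖q.1‖ ≤ R := le_trans (norm_fst_le (q.1, t⁻¹ • q.2)) h1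
        have h3 : ‖t⁻¹ • q.2‖ ≤ R := le_trans (norm_snd_le (q.1, t⁻¹ • q.2)) h1
        have h4 : ‖q.2‖ ≤ t * R := by
          rw [norm_smul, norm_inv, Real.norm_eq_abs, abs_of_pos ht0] at h3
          have := mul_le_mul_of_nonneg_left h3 ht0.le
          calc ‖q.2‖ = t * (t⁻¹ * ‖q.2‖) := by field_simp
            _ ≤ t * R := this
        apply hq
        rw [Metric.mem_closedBall, dist_zero_right, Prod.norm_def]
        apply max_le
        · nlinarith
        · nlinarith
      exact mul_eq_zero_of_right _ hz
    have hψi : Integrable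
        (fun q : E3 × E3 => f₀ (q.1 - q.2, t⁻¹ • q.2) * φ (q.1, t⁻¹ • q.2))
        ((volume : Measure E3).prod volume) := by
      rw [← Measure.volume_eq_prod]
      exact (hψc t).integrable_of_hasCompactSupport hψsupp
    rw [Measure.volume_eq_prod, integral_prod _ hFi, integral_prod _ hψi]
    refine integral_congr_ae (Filter.Eventually.of_forall fun x => ?_)
    have hscale := Measure.integral_comp_inv_smul_of_nonneg (volume : Measure E3)
      (fun v => f₀ (x - t • v, v) * φ (x, v)) ht0.le
    rw [finrank_euclideanSpace_fin, smul_eq_mul] at hscale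
    calc (∫ v : E3, t ^ 3 * f₀ (x - t • v, v) * φ (x, v))
        = t ^ 3 * ∫ v : E3, f₀ (x - t • v, v) * φ (x, v) := by
          simp_rw [mul_assoc]
          exact integral_const_mul _ _
      _ = ∫ u : E3, f₀ (x - t • (t⁻¹ • u), t⁻¹ • u) * φ (x, t⁻¹ • u) := hscale.symm
      _ = ∫ u : E3, f₀ (x - u, t⁻¹ • u) * φ (x, t⁻¹ • u) := by
          refine integral_congr_ae (Filter.Eventually.of_forall fun u => ?_)
          simp [smul_smul, mul_inv_cancel₀ ht0.ne']
  -- Step 2: dominated convergence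
  have hLi : Integrable (fun q : E3 × E3 => f₀ (q.1 - q.2, 0) * φ (q.1, 0)) := by
    refine hbint.mono' ?_ (Filter.Eventually.of_forall fun q => habs q 0)
    exact Continuous.aestronglyMeasurable (by fun_prop)
  have hmain : Filter.Tendsto
      (fun t : ℝ => ∫ q : E3 × E3, f₀ (q.1 - q.2, t⁻¹ • q.2) * φ (q.1, t⁻¹ • q.2))
      Filter.atTop (nhds (∫ q : E3 × E3, f₀ (q.1 - q.2, 0) * φ (q.1, 0))) := by
    apply tendsto_integral_filter_of_dominated_convergence bound
    · exact Filter.Eventually.of_forall fun t => (hψc t).aestronglyMeasurable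
    · exact Filter.Eventually.of_forall fun t =>
        Filter.Eventually.of_forall fun q => habs q _
    · exact hbint
    · refine Filter.Eventually.of_forall fun q => ?_
      have h1 : Filter.Tendsto (fun t : ℝ => t⁻¹ • q.2) Filter.atTop (nhds 0) := by
        have h0 : Filter.Tendsto (fun t : ℝ => t⁻¹) Filter.atTop (nhds (0 : ℝ)) :=
          tendsto_inv_atTop_zero
        have := h0.smul_const (q.2 : E3)
        simpa using this
      have h2 : Continuous (fun v : E3 => f₀ (q.1 - q.2, v) * φ (q.1, v)) := by fun_prop
      have h3 := (h2.tendsto 0).comp h1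
      exact h3
  -- identify the limit
  have hval : (∫ q : E3 × E3, f₀ (q.1 - q.2, 0) * φ (q.1, 0))
      = (∫ y : E3, f₀ (y, 0)) * ∫ x : E3, φ (x, 0) := by
    have hLi' : Integrable (fun q : E3 × E3 => f₀ (q.1 - q.2, 0) * φ (q.1, 0))
        ((volume : Measure E3).prod volume) := by
      rw [← Measure.volume_eq_prod]; exact hLi
    rw [Measure.volume_eq_prod, integral_prod _ hLi']
    have hx : ∀ x : E3, (∫ u : E3, f₀ (x - u, 0) * φ (x, 0))
        = (∫ y : E3, f₀ (y, 0)) * φ (x, 0) := by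
      intro x
      rw [integral_mul_const]
      congr 1
      exact integral_sub_left_eq_self (fun y => f₀ (y, 0)) volume x
    simp_rw [hx]
    exact integral_const_mul _ _
  rw [← hval]
  refine hmain.congr' ?_
  filter_upwards [Filter.eventually_ge_atTop (1 : ℝ)] with t ht
  exact (step1 t ht).symm
end

section
/- Suppose Ψ : [2,∞) × ℝ³ × ℝ³ → ℝ is continuous and bounded, and admits two asymptotic polyhomogeneous expansions of order N₀: there are continuous bounded functions A_{q,α,p}, B_{q,α,p} : ℝ³ → ℝ (indices q ≤ N₀, |α| + p ≤ q) and S ∈ ℕ, C > 0 such that for all t ≥ 2 and all (x,v) with |x| ≤ t, both |Ψ(t,x,v) − Σ_{q ≤ N₀} Σ_{|α|+p ≤ q} (x^α log^p(t)/t^q) A_{q,α,p}(v)| and the analogous quantity with B in place of A are bounded by C ⟨x⟩^{N₀+1} log^S(t) / t^{N₀+1}. Then A_{q,α,p} = B_{q,α,p} for all q ≤ N₀ and |α| + p ≤ q. -/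
open MeasureTheory Real

/-- Pairs `(α, p)` with `|α| + p ≤ q`. -/
def coefIdx (q : ℕ) : Finset ((Fin 3 → ℕ) × ℕ) :=
  ((Finset.Iic (fun _ => q : Fin 3 → ℕ)) ×ˢ Finset.range (q + 1)).filter
    fun ap => (∑ i, ap.1 i) + ap.2 ≤ q

/-! Put `D = A - B` and fix `x`, `v`. Subtracting the two expansions gives
`∑_{q ≤ N₀} P_q(log t) / t^q = o(t^{-N₀})` with `P_q(L) = ∑_{|α|+p ≤ q} x^α L^p D_{q,α,p}(v)`.
Letting `t → ∞` shows `P_0(log t) → 0`, so `P_0 = 0` since a nonzero polynomial does not tend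
to `0` at infinity; multiplying by `t` and inducting on `N₀` kills every `P_q`. The coefficient
of `L^p` in `P_q` is then a polynomial in `x` vanishing on all of `ℝ³`, so each `D_{q,α,p}(v)`
is `0`. -/

open Filter Asymptotics Polynomial Topology Finset

theorem Polynomial.eq_zero_of_tendsto_eval_atTop_zero {𝕜 : Type*} [NormedField 𝕜]
    [LinearOrder 𝕜] [IsStrictOrderedRing 𝕜] [OrderTopology 𝕜] {P : 𝕜[X]}
    (h : Tendsto (fun x => P.eval x) atTop (𝓝 0)) : P = 0 :=
  leadingCoeff_eq_zero.mp ((tendsto_nhds_iff P).mp h).1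

theorem isBigO_id_pow_atTop {k : ℕ} (hk : k ≠ 0) : (id : ℝ → ℝ) =O[atTop] fun t => t ^ k :=
  IsBigO.of_bound 1 <| (eventually_ge_atTop 1).mono fun t ht => by
    have ht0 : 0 ≤ t := zero_le_one.trans ht
    simpa [abs_of_nonneg ht0, abs_of_nonneg (pow_nonneg ht0 k)] using le_self_pow₀ ht hk

theorem tendsto_log_pow_div_pow_atTop (i : ℕ) {k : ℕ} (hk : k ≠ 0) :
    Tendsto (fun t => log t ^ i / t ^ k) atTop (𝓝 0) :=
  (isLittleO_pow_log_id_atTop.trans_isBigO (isBigO_id_pow_atTop hk)).tendsto_div_nhds_zero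

theorem Polynomial.tendsto_eval_log_div_pow_atTop (P : ℝ[X]) {k : ℕ} (hk : k ≠ 0) :
    Tendsto (fun t => P.eval (log t) / t ^ k) atTop (𝓝 0) := by
  simp only [eval_eq_sum_range, sum_div, mul_div_assoc]
  simpa using tendsto_finsetSum _ fun i _ =>
    (tendsto_log_pow_div_pow_atTop i hk).const_mul (P.coeff i)

theorem isLittleO_inv_pow_of_abs_le_log_pow_div_pow {f : ℝ → ℝ} {C : ℝ} {S n : ℕ}
    (h : ∀ᶠ t in atTop, |f t| ≤ C * log t ^ S / t ^ (n + 1)) :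
    f =o[atTop] fun t => (t ^ n)⁻¹ := by
  have hO : f =O[atTop] fun t => log t ^ S / t ^ (n + 1) :=
    IsBigO.of_bound C <| (h.and (eventually_ge_atTop 1)).mono fun t ⟨ht, ht1⟩ => by
      have hnonneg : 0 ≤ log t ^ S / t ^ (n + 1) :=
        div_nonneg (pow_nonneg (log_nonneg ht1) S) (pow_nonneg (zero_le_one.trans ht1) _)
      rwa [Real.norm_eq_abs, Real.norm_eq_abs, abs_of_nonneg hnonneg, ← mul_div_assoc]
  have hlog : (fun t => log t ^ S / t ^ 1) =o[atTop] fun _ => (1 : ℝ) :=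
    (isLittleO_one_iff ℝ).mpr (tendsto_log_pow_div_pow_atTop S one_ne_zero)
  refine hO.trans_isLittleO
    ((hlog.mul_isBigO (isBigO_refl (fun t => (t ^ n)⁻¹) atTop)).congr' ?_ ?_)
  · filter_upwards [eventually_ne_atTop 0] with t ht
    field_simp
    ring
  · simp

theorem tendsto_zero_of_isLittleO_inv_pow {f : ℝ → ℝ} {n : ℕ}
    (h : f =o[atTop] fun t => (t ^ n)⁻¹) : Tendsto f atTop (𝓝 0) :=
  (isLittleO_one_iff ℝ).mp <| h.trans_isBigO <| IsBigO.of_bound 1 <|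
    (eventually_ge_atTop 1).mono fun t ht => by
      simpa [abs_of_nonneg (zero_le_one.trans ht)] using inv_le_one_of_one_le₀ (one_le_pow₀ ht)

theorem head_eq_zero_of_tendsto_sum_eval_log_div_pow (n : ℕ) (P : ℕ → ℝ[X])
    (h : Tendsto (fun t => ∑ q ∈ range (n + 1), (P q).eval (log t) / t ^ q) atTop (𝓝 0)) :
    P 0 = 0 := by
  have htail : Tendsto (fun t => ∑ q ∈ range n, (P (q + 1)).eval (log t) / t ^ (q + 1))
      atTop (𝓝 0) := by
    simpa using tendsto_finsetSum _ fun q _ =>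
      (P (q + 1)).tendsto_eval_log_div_pow_atTop q.succ_ne_zero
  have hlead : Tendsto (fun t => (P 0).eval (log t)) atTop (𝓝 0) := by
    simpa [sum_range_succ'] using h.sub htail
  exact eq_zero_of_tendsto_eval_atTop_zero <| by
    simpa [Function.comp_def] using hlead.comp tendsto_exp_atTop

theorem isLittleO_sum_eval_log_div_pow_tail (n : ℕ) (P : ℕ → ℝ[X]) (hP : P 0 = 0)
    (h : (fun t => ∑ q ∈ range (n + 2), (P q).eval (log t) / t ^ q) =o[atTop]
      fun t => (t ^ (n + 1))⁻¹) :
    (fun t => ∑ q ∈ range (n + 1), (P (q + 1)).eval (log t) / t ^ q) =o[atTop]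
      fun t => (t ^ n)⁻¹ := by
  refine ((isBigO_refl id atTop).mul_isLittleO h).congr' ?_ ?_ <;>
    filter_upwards [eventually_ne_atTop 0] with t ht
  · rw [sum_range_succ' _ (n + 1), hP]
    simp only [eval_zero, pow_zero, div_one, add_zero, id, mul_sum, pow_succ]
    exact sum_congr rfl fun q _ => by field_simp
  · simp [pow_succ]
    field_simp

theorem eq_zero_of_sum_eval_log_div_pow_isLittleO (n : ℕ) (P : ℕ → ℝ[X])
    (h : (fun t => ∑ q ∈ range (n + 1), (P q).eval (log t) / t ^ q) =o[atTop]
      fun t => (t ^ n)⁻¹) :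
    ∀ q ≤ n, P q = 0 := by
  induction n generalizing P with
  | zero =>
    intro q hq
    obtain rfl := Nat.le_zero.mp hq
    exact head_eq_zero_of_tendsto_sum_eval_log_div_pow 0 P (tendsto_zero_of_isLittleO_inv_pow h)
  | succ n ih =>
    have hP0 :=
      head_eq_zero_of_tendsto_sum_eval_log_div_pow _ P (tendsto_zero_of_isLittleO_inv_pow h)
    rintro (_ | q) hq
    · exact hP0
    · exact ih _ (isLittleO_sum_eval_log_div_pow_tail n P hP0 h) q (by omega)

theorem MvPolynomial.coeff_eq_zero_of_forall_sum_mul_prod_pow_eq_zero {K σ : Type*}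
    [CommRing K] [IsDomain K] [Infinite K] [Fintype σ] {s : Finset (σ → ℕ)} {c : (σ → ℕ) → K}
    (h : ∀ y : σ → K, ∑ α ∈ s, c α * ∏ i, y i ^ α i = 0) {α : σ → ℕ} (hα : α ∈ s) :
    c α = 0 := by
  classical
  let P : MvPolynomial σ K := ∑ β ∈ s, monomial (Finsupp.equivFunOnFinite.symm β) (c β)
  have hP : P = 0 := funext fun y => by
    simpa [P, eval_monomial, Finsupp.prod_fintype] using h y
  simpa only [P, coeff_sum, MvPolynomial.coeff_monomial, EmbeddingLike.apply_eq_iff_eq,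
    sum_ite_eq', hα, if_true, coeff_zero] using
    congrArg (coeff (Finsupp.equivFunOnFinite.symm α)) hP

theorem eq_zero_of_polyhomogeneous_sum_isLittleO {N : ℕ} {D : ℕ → (Fin 3 → ℕ) → ℕ → ℝ}
    (h : ∀ y : Fin 3 → ℝ, (fun t => ∑ q ∈ range (N + 1), ∑ ap ∈ coefIdx q,
      (∏ i, y i ^ ap.1 i) * log t ^ ap.2 / t ^ q * D q ap.1 ap.2) =o[atTop] fun t => (t ^ N)⁻¹)
    {q : ℕ} (hq : q ≤ N) {α : Fin 3 → ℕ} {p : ℕ} (hαp : ∑ i, α i + p ≤ q) : D q α p = 0 := by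
  let P (y : Fin 3 → ℝ) (q : ℕ) : ℝ[X] :=
    ∑ ap ∈ coefIdx q, C ((∏ i, y i ^ ap.1 i) * D q ap.1 ap.2) * X ^ ap.2
  have hP (y : Fin 3 → ℝ) : P y q = 0 := by
    refine eq_zero_of_sum_eval_log_div_pow_isLittleO N (P y) ?_ q hq
    refine (h y).congr_left fun t => ?_
    simp only [P, eval_finsetSum, sum_div, eval_mul, eval_C, eval_pow, eval_X]
    exact sum_congr rfl fun q _ => sum_congr rfl fun ap _ => by ring
  have hcoeff (y : Fin 3 → ℝ) : ∑ β ∈ Iic (fun _ => q),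
      (if ∑ i, β i + p ≤ q then D q β p else 0) * ∏ i, y i ^ β i = 0 := by
    refine .trans ?_ ((congrArg (coeff · p) (hP y)).trans (coeff_zero p))
    simp only [P, finsetSum_coeff, coeff_C_mul_X_pow]
    simp only [coefIdx, sum_filter, sum_product]
    refine sum_congr rfl fun β _ => ?_
    rw [sum_eq_single_of_mem p (mem_range.mpr (by omega)) fun b _ hb => by simp [Ne.symm hb]]
    simp [ite_mul, mul_comm]
  have hα : α ∈ Iic (fun _ => q) := mem_Iic.mpr fun i =>
    (single_le_sum (fun j _ => Nat.zero_le (α j)) (mem_univ i)).trans (by omega)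
  simpa [hαp] using MvPolynomial.coeff_eq_zero_of_forall_sum_mul_prod_pow_eq_zero hcoeff hα

theorem polyhomogeneous_expansion_unique_general (N₀ : ℕ) (Ψ : ℝ → E3 → E3 → ℝ)
    (A B : ℕ → (Fin 3 → ℕ) → ℕ → E3 → ℝ)
    (hexpA : ∃ S : ℕ, ∃ C : ℝ, 0 < C ∧
      ∀ t : ℝ, 2 ≤ t → ∀ x v : E3, ‖x‖ ≤ t →
        |Ψ t x v - ∑ q ∈ Finset.range (N₀ + 1), ∑ ap ∈ coefIdx q,
            (∏ i, x i ^ ap.1 i) * Real.log t ^ ap.2 / t ^ q * A q ap.1 ap.2 v|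
          ≤ C * Real.sqrt (1 + ‖x‖ ^ 2) ^ (N₀ + 1) * Real.log t ^ S / t ^ (N₀ + 1))
    (hexpB : ∃ S : ℕ, ∃ C : ℝ, 0 < C ∧
      ∀ t : ℝ, 2 ≤ t → ∀ x v : E3, ‖x‖ ≤ t →
        |Ψ t x v - ∑ q ∈ Finset.range (N₀ + 1), ∑ ap ∈ coefIdx q,
            (∏ i, x i ^ ap.1 i) * Real.log t ^ ap.2 / t ^ q * B q ap.1 ap.2 v|
          ≤ C * Real.sqrt (1 + ‖x‖ ^ 2) ^ (N₀ + 1) * Real.log t ^ S / t ^ (N₀ + 1)) :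
    ∀ q : ℕ, q ≤ N₀ → ∀ (α : Fin 3 → ℕ) (p : ℕ), (∑ i, α i) + p ≤ q →
      A q α p = B q α p := by
  intro q hq α p hαp
  funext v
  refine sub_eq_zero.mp (eq_zero_of_polyhomogeneous_sum_isLittleO
    (D := fun q α p => A q α p v - B q α p v) (fun y => ?_) hq hαp)
  let x : E3 := WithLp.toLp 2 y
  obtain ⟨SA, CA, -, hA⟩ := hexpA
  obtain ⟨SB, CB, -, hB⟩ := hexpB
  have hxt : ∀ᶠ t in atTop, 2 ≤ t ∧ ‖x‖ ≤ t :=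
    (eventually_ge_atTop 2).and (eventually_ge_atTop ‖x‖)
  have hRA :=
    isLittleO_inv_pow_of_abs_le_log_pow_div_pow (hxt.mono fun t ht => hA t ht.1 x v ht.2)
  have hRB :=
    isLittleO_inv_pow_of_abs_le_log_pow_div_pow (hxt.mono fun t ht => hB t ht.1 x v ht.2)
  refine (hRB.sub hRA).congr_left fun t => ?_
  simp only [x, mul_sub, sum_sub_distrib]
  ring

/-- Uniqueness of the coefficients of asymptotic polyhomogeneous expansions of order `N₀`:
if a continuous bounded `Ψ` admits two such expansions with coefficient families `A` and
`B`, then `A = B` on the admissible index range. -/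
theorem polyhomogeneous_expansion_unique (N₀ : ℕ) (Ψ : ℝ → E3 → E3 → ℝ)
    (hcont : Continuous fun p : ℝ × E3 × E3 => Ψ p.1 p.2.1 p.2.2)
    (hbdd : ∃ M : ℝ, ∀ t : ℝ, 2 ≤ t → ∀ x v : E3, |Ψ t x v| ≤ M)
    (A B : ℕ → (Fin 3 → ℕ) → ℕ → E3 → ℝ)
    (hA : ∀ q α p, Continuous (A q α p) ∧ ∃ M : ℝ, ∀ v, |A q α p v| ≤ M)
    (hB : ∀ q α p, Continuous (B q α p) ∧ ∃ M : ℝ, ∀ v, |B q α p v| ≤ M)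
    (hexpA : ∃ S : ℕ, ∃ C : ℝ, 0 < C ∧
      ∀ t : ℝ, 2 ≤ t → ∀ x v : E3, ‖x‖ ≤ t →
        |Ψ t x v - ∑ q ∈ Finset.range (N₀ + 1), ∑ ap ∈ coefIdx q,
            (∏ i, x i ^ ap.1 i) * Real.log t ^ ap.2 / t ^ q * A q ap.1 ap.2 v|
          ≤ C * Real.sqrt (1 + ‖x‖ ^ 2) ^ (N₀ + 1) * Real.log t ^ S / t ^ (N₀ + 1))
    (hexpB : ∃ S : ℕ, ∃ C : ℝ, 0 < C ∧
      ∀ t : ℝ, 2 ≤ t → ∀ x v : E3, ‖x‖ ≤ t →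
        |Ψ t x v - ∑ q ∈ Finset.range (N₀ + 1), ∑ ap ∈ coefIdx q,
            (∏ i, x i ^ ap.1 i) * Real.log t ^ ap.2 / t ^ q * B q ap.1 ap.2 v|
          ≤ C * Real.sqrt (1 + ‖x‖ ^ 2) ^ (N₀ + 1) * Real.log t ^ S / t ^ (N₀ + 1)) :
    ∀ q : ℕ, q ≤ N₀ → ∀ (α : Fin 3 → ℕ) (p : ℕ), (∑ i, α i) + p ≤ q →
      A q α p = B q α p :=
  polyhomogeneous_expansion_unique_general N₀ Ψ A B hexpA hexpB
end

section
/- Let h : ℝ³ × ℝ³ → ℝ be measurable with M := sup_{y,v} ⟨y − t v⟩⁷ ⟨v⟩⁷ |h(y,v)| < ∞ for a fixed t ≥ 0. Then there is a universal constant C such that for all x ∈ ℝ³, ∫_{ℝ³} |h(x,v)| dv ≤ C M / ⟨t + |x|⟩³. -/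
open MeasureTheory Real

/-!
Write `⟨z⟩ = √(1 + ‖z‖²)` and `d = dim E`. From `‖x‖ ≤ ‖x - t v‖ + t ‖v‖` one gets
`⟨t + ‖x‖⟩ ≲ ⟨t⟩ ⟨v⟩ ⟨x - t v⟩`, so the weighted bound on `h` turns into
`⟨t + ‖x‖⟩ᵈ |h(x, v)| ≲ M ⟨t⟩ᵈ ⟨x - t v⟩⁻ᵏ ⟨v⟩⁻ᵏ` with `7 = d + k`; since `k = 4 > d = 3`,
`⟨·⟩⁻ᵏ` is integrable.
It remains to see that `⟨t⟩ᵈ ∫ ⟨x - t v⟩⁻ᵏ ⟨v⟩⁻ᵏ dv` is bounded uniformly in `t` and `x`: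
for `t ≤ 1` drop the first factor, for `t ≥ 1` drop the second and substitute `y = x - t v`,
which produces the factor `t⁻ᵈ`.
-/

open Module

section JapaneseBracket

variable {E : Type*} [NormedAddCommGroup E]

noncomputable def japaneseBracket (z : E) : ℝ := √(1 + ‖z‖ ^ 2)

lemma japaneseBracket_real (s : ℝ) : japaneseBracket s = √(1 + s ^ 2) := by
  rw [japaneseBracket, Real.norm_eq_abs, sq_abs]

lemma one_le_japaneseBracket (z : E) : 1 ≤ japaneseBracket z :=
  Real.one_le_sqrt.2 (le_add_of_nonneg_right (by positivity))

lemma japaneseBracket_pos (z : E) : 0 < japaneseBracket z :=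
  one_pos.trans_le (one_le_japaneseBracket z)

lemma japaneseBracket_sub_comm (a b : E) : japaneseBracket (a - b) = japaneseBracket (b - a) := by
  rw [japaneseBracket, japaneseBracket, norm_sub_rev]

@[fun_prop]
lemma continuous_japaneseBracket : Continuous (japaneseBracket : E → ℝ) := by
  unfold japaneseBracket; fun_prop

lemma inv_japaneseBracket_pow_nonneg (k : ℕ) (z : E) : 0 ≤ (japaneseBracket z ^ k)⁻¹ :=
  inv_nonneg.2 (pow_nonneg (japaneseBracket_pos z).le k)

lemma inv_japaneseBracket_pow_le_one (k : ℕ) (z : E) : (japaneseBracket z ^ k)⁻¹ ≤ 1 :=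
  inv_le_one_of_one_le₀ (one_le_pow₀ (one_le_japaneseBracket z))

lemma japaneseBracket_le_sqrt_two {z : E} (hz : ‖z‖ ≤ 1) : japaneseBracket z ≤ √2 := by
  unfold japaneseBracket
  gcongr
  nlinarith [norm_nonneg z]

lemma japaneseBracket_le_sqrt_two_mul_norm {z : E} (hz : 1 ≤ ‖z‖) :
    japaneseBracket z ≤ √2 * ‖z‖ := by
  calc japaneseBracket z ≤ √(2 * ‖z‖ ^ 2) := by unfold japaneseBracket; gcongr; nlinarith
    _ = √2 * ‖z‖ := by rw [Real.sqrt_mul zero_le_two, Real.sqrt_sq (norm_nonneg z)]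

lemma japaneseBracket_add_norm_le [NormedSpace ℝ E] {t : ℝ} (ht : 0 ≤ t) (x v : E) :
    japaneseBracket (t + ‖x‖) ≤
      √2 ^ 3 * (japaneseBracket t * japaneseBracket v * japaneseBracket (x - t • v)) := by
  have hx : ‖x‖ ≤ ‖x - t • v‖ + t * ‖v‖ := by
    simpa [norm_smul, abs_of_nonneg ht] using norm_le_norm_sub_add x (t • v)
  calc japaneseBracket (t + ‖x‖) ≤ 1 + ‖t + ‖x‖‖ := sqrt_one_add_norm_sq_le _
    _ = 1 + t + ‖x‖ := by rw [Real.norm_of_nonneg (by positivity), add_assoc]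
    _ ≤ (1 + ‖t‖) * (1 + ‖v‖) * (1 + ‖x - t • v‖) := by
      rw [Real.norm_of_nonneg ht]
      have hv := norm_nonneg v
      have hxv := norm_nonneg (x - t • v)
      nlinarith [mul_nonneg ht hxv, mul_nonneg (mul_nonneg ht hv) hxv, mul_nonneg hv hxv]
    _ ≤ (√2 * japaneseBracket t) * (√2 * japaneseBracket v) *
        (√2 * japaneseBracket (x - t • v)) := by
      unfold japaneseBracket
      gcongr <;> exact one_add_norm_le_sqrt_two_mul_sqrt _
    _ = _ := by ring

lemma japaneseBracket_pow_mul_le_of_weighted_bound [NormedSpace ℝ E] {d k : ℕ} {t H M : ℝ}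
    (ht : 0 ≤ t) (x v : E) (hH : 0 ≤ H)
    (hM : japaneseBracket (x - t • v) ^ (d + k) * japaneseBracket v ^ (d + k) * H ≤ M) :
    japaneseBracket (t + ‖x‖) ^ d * H ≤
      (√2 ^ 3) ^ d * japaneseBracket t ^ d * M *
        ((japaneseBracket (x - t • v) ^ k)⁻¹ * (japaneseBracket v ^ k)⁻¹) := by
  set a := japaneseBracket (x - t • v)
  set b := japaneseBracket v
  have ha : 0 < a := japaneseBracket_pos _
  have hb : 0 < b := japaneseBracket_pos _
  calc japaneseBracket (t + ‖x‖) ^ d * H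
      ≤ (√2 ^ 3 * (japaneseBracket t * b * a)) ^ d * H := by
        gcongr
        · exact (japaneseBracket_pos _).le
        · exact japaneseBracket_add_norm_le ht x v
    _ = (√2 ^ 3) ^ d * japaneseBracket t ^ d *
          (a ^ (d + k) * b ^ (d + k) * H) * ((a ^ k)⁻¹ * (b ^ k)⁻¹) := by
        field_simp
        ring
    _ ≤ _ := by
        have := japaneseBracket_pos t
        gcongr

end JapaneseBracket

section Integral

variable {E : Type*} [NormedAddCommGroup E] [NormedSpace ℝ E] [FiniteDimensional ℝ E]
  [MeasurableSpace E] [BorelSpace E] (μ : Measure E) [μ.IsAddHaarMeasure]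

lemma integrable_inv_japaneseBracket_pow {k : ℕ} (hk : finrank ℝ E < k) :
    Integrable (fun z : E ↦ (japaneseBracket z ^ k)⁻¹) μ := by
  refine (integrable_rpow_neg_one_add_norm_sq (μ := μ) (r := k) (by exact_mod_cast hk)).congr
    (ae_of_all _ fun z ↦ ?_)
  dsimp only
  rw [japaneseBracket, Real.sqrt_eq_rpow, ← Real.rpow_mul_natCast (by positivity),
    ← Real.rpow_neg (by positivity)]
  ring_nf

lemma integral_inv_japaneseBracket_sub_smul_pow (k : ℕ) (x : E) {t : ℝ} (ht : 0 ≤ t) :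
    ∫ v, (japaneseBracket (x - t • v) ^ k)⁻¹ ∂μ =
      (t ^ finrank ℝ E)⁻¹ * ∫ v, (japaneseBracket v ^ k)⁻¹ ∂μ := by
  simp_rw [japaneseBracket_sub_comm x]
  rw [Measure.integral_comp_smul_of_nonneg μ (fun w ↦ (japaneseBracket (w - x) ^ k)⁻¹) t
      (hR := ht),
    integral_sub_right_eq_self (fun w ↦ (japaneseBracket w ^ k)⁻¹) x, smul_eq_mul]

lemma integrable_inv_japaneseBracket_sub_smul_pow {k : ℕ} (hk : finrank ℝ E < k) (x : E)
    {t : ℝ} (ht : t ≠ 0) :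
    Integrable (fun v ↦ (japaneseBracket (x - t • v) ^ k)⁻¹) μ := by
  simp_rw [japaneseBracket_sub_comm x]
  exact ((integrable_inv_japaneseBracket_pow μ hk).comp_sub_right x).comp_smul ht

lemma integrable_inv_japaneseBracket_sub_smul_pow_mul {k : ℕ} (hk : finrank ℝ E < k) (x : E)
    (t : ℝ) :
    Integrable (fun v ↦ (japaneseBracket (x - t • v) ^ k)⁻¹ * (japaneseBracket v ^ k)⁻¹) μ := by
  refine (integrable_inv_japaneseBracket_pow μ hk).mono' (by fun_prop) (ae_of_all _ fun v ↦ ?_)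
  rw [Real.norm_of_nonneg (mul_nonneg (inv_japaneseBracket_pow_nonneg k _)
    (inv_japaneseBracket_pow_nonneg k _))]
  exact mul_le_of_le_one_left (inv_japaneseBracket_pow_nonneg k _)
    (inv_japaneseBracket_pow_le_one k _)

lemma japaneseBracket_pow_mul_integral_le {k : ℕ} (hk : finrank ℝ E < k) (x : E) {t : ℝ}
    (ht : 0 ≤ t) :
    japaneseBracket t ^ finrank ℝ E *
        ∫ v, (japaneseBracket (x - t • v) ^ k)⁻¹ * (japaneseBracket v ^ k)⁻¹ ∂μ ≤
      √2 ^ finrank ℝ E * ∫ v, (japaneseBracket v ^ k)⁻¹ ∂μ := by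
  set d := finrank ℝ E
  have hint := integrable_inv_japaneseBracket_sub_smul_pow_mul μ hk x t
  have hint_nonneg : 0 ≤ ∫ v, (japaneseBracket (x - t • v) ^ k)⁻¹ * (japaneseBracket v ^ k)⁻¹ ∂μ :=
    integral_nonneg fun v ↦ mul_nonneg (inv_japaneseBracket_pow_nonneg k _)
      (inv_japaneseBracket_pow_nonneg k _)
  rcases le_total t 1 with ht1 | ht1
  · have hW : ∫ v, (japaneseBracket (x - t • v) ^ k)⁻¹ * (japaneseBracket v ^ k)⁻¹ ∂μ ≤
        ∫ v, (japaneseBracket v ^ k)⁻¹ ∂μ :=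
      integral_mono hint (integrable_inv_japaneseBracket_pow μ hk) fun v ↦
        mul_le_of_le_one_left (inv_japaneseBracket_pow_nonneg k _)
          (inv_japaneseBracket_pow_le_one k _)
    have hB : japaneseBracket t ≤ √2 :=
      japaneseBracket_le_sqrt_two (by rwa [Real.norm_of_nonneg ht])
    exact mul_le_mul (pow_le_pow_left₀ (japaneseBracket_pos t).le hB d) hW hint_nonneg
      (by positivity)
  · have ht0 : 0 < t := one_pos.trans_le ht1
    have hW : ∫ v, (japaneseBracket (x - t • v) ^ k)⁻¹ * (japaneseBracket v ^ k)⁻¹ ∂μ ≤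
        (t ^ d)⁻¹ * ∫ v, (japaneseBracket v ^ k)⁻¹ ∂μ := by
      rw [← integral_inv_japaneseBracket_sub_smul_pow μ k x ht]
      exact integral_mono hint (integrable_inv_japaneseBracket_sub_smul_pow μ hk x ht0.ne')
        fun v ↦ mul_le_of_le_one_right (inv_japaneseBracket_pow_nonneg k _)
          (inv_japaneseBracket_pow_le_one k _)
    have hB : japaneseBracket t ≤ √2 * t :=
      (japaneseBracket_le_sqrt_two_mul_norm (by rwa [Real.norm_of_nonneg ht])).trans_eq
        (by rw [Real.norm_of_nonneg ht])
    calc japaneseBracket t ^ d *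
          ∫ v, (japaneseBracket (x - t • v) ^ k)⁻¹ * (japaneseBracket v ^ k)⁻¹ ∂μ
        ≤ (√2 * t) ^ d * ((t ^ d)⁻¹ * ∫ v, (japaneseBracket v ^ k)⁻¹ ∂μ) :=
          mul_le_mul (pow_le_pow_left₀ (japaneseBracket_pos t).le hB d) hW hint_nonneg
            (by positivity)
      _ = √2 ^ d * ∫ v, (japaneseBracket v ^ k)⁻¹ ∂μ := by
          rw [mul_pow]; field_simp

lemma integral_inv_japaneseBracket_pow_pos {k : ℕ} (hk : finrank ℝ E < k) :
    0 < ∫ v, (japaneseBracket v ^ k)⁻¹ ∂μ := by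
  rw [integral_pos_iff_support_of_nonneg (inv_japaneseBracket_pow_nonneg k)
    (integrable_inv_japaneseBracket_pow μ hk)]
  have hsupp : Function.support (fun v : E ↦ (japaneseBracket v ^ k)⁻¹) = Set.univ :=
    Function.support_eq_univ fun v ↦ (inv_pos.2 (pow_pos (japaneseBracket_pos v) k)).ne'
  rw [hsupp]
  exact isOpen_univ.measure_pos μ Set.univ_nonempty

theorem integral_abs_le_of_weighted_bound {k : ℕ} (hk : finrank ℝ E < k) {t : ℝ} (ht : 0 ≤ t)
    (f : E → ℝ) (M : ℝ) (x : E)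
    (hf : ∀ v, japaneseBracket (x - t • v) ^ (finrank ℝ E + k) *
      japaneseBracket v ^ (finrank ℝ E + k) * |f v| ≤ M) :
    ∫ v, |f v| ∂μ ≤ (√2 ^ 3) ^ finrank ℝ E * √2 ^ finrank ℝ E *
      (∫ v, (japaneseBracket v ^ k)⁻¹ ∂μ) * M / japaneseBracket (t + ‖x‖) ^ finrank ℝ E := by
  set d := finrank ℝ E
  set W := fun v ↦ (japaneseBracket (x - t • v) ^ k)⁻¹ * (japaneseBracket v ^ k)⁻¹
  have hM : 0 ≤ M := le_trans (mul_nonneg (mul_nonneg (pow_nonneg (japaneseBracket_pos _).le _)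
    (pow_nonneg (japaneseBracket_pos _).le _)) (abs_nonneg _)) (hf 0)
  rw [le_div_iff₀ (pow_pos (japaneseBracket_pos _) d), mul_comm, ← integral_const_mul]
  calc ∫ v, japaneseBracket (t + ‖x‖) ^ d * |f v| ∂μ
      ≤ ∫ v, (√2 ^ 3) ^ d * japaneseBracket t ^ d * M * W v ∂μ :=
        integral_mono_of_nonneg
          (ae_of_all _ fun v ↦ mul_nonneg (pow_nonneg (japaneseBracket_pos _).le _) (abs_nonneg _))
          ((integrable_inv_japaneseBracket_sub_smul_pow_mul μ hk x t).const_mul _)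
          (ae_of_all _ fun v ↦ japaneseBracket_pow_mul_le_of_weighted_bound ht x v
            (abs_nonneg _) (hf v))
    _ = (√2 ^ 3) ^ d * M * (japaneseBracket t ^ d * ∫ v, W v ∂μ) := by
        rw [integral_const_mul]; ring
    _ ≤ (√2 ^ 3) ^ d * M * (√2 ^ d * ∫ v, (japaneseBracket v ^ k)⁻¹ ∂μ) := by
        gcongr ?_ * ?_
        exact japaneseBracket_pow_mul_integral_le μ hk x ht
    _ = _ := by ring

end Integral

/-- Linear decay of velocity averages: there is a universal constant `C` such that whenever
`⟨y − tv⟩⁷ ⟨v⟩⁷ |h(y,v)| ≤ M` for all `y, v` (for a fixed `t ≥ 0`), then for all `x`,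
`∫ |h(x,v)| dv ≤ C M / ⟨t + |x|⟩³`. -/
theorem velocity_average_decay :
    ∃ C : ℝ, 0 < C ∧
      ∀ t : ℝ, 0 ≤ t →
        ∀ h : E3 × E3 → ℝ, Measurable h →
          ∀ M : ℝ,
            (∀ y v : E3,
              Real.sqrt (1 + ‖y - t • v‖ ^ 2) ^ 7 * Real.sqrt (1 + ‖v‖ ^ 2) ^ 7 *
                |h (y, v)| ≤ M) →
            ∀ x : E3,
              (∫ v : E3, |h (x, v)|) ≤ C * M / Real.sqrt (1 + (t + ‖x‖) ^ 2) ^ 3 := by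
  have hdim : finrank ℝ E3 = 3 := finrank_euclideanSpace_fin
  have hk : finrank ℝ E3 < 4 := by rw [hdim]; norm_num
  refine ⟨(√2 ^ 3) ^ 3 * √2 ^ 3 * ∫ v : E3, (japaneseBracket v ^ 4)⁻¹,
    by have := integral_inv_japaneseBracket_pow_pos (volume : Measure E3) hk; positivity, ?_⟩
  intro t ht h _ M hM x
  have hbound := integral_abs_le_of_weighted_bound volume hk ht (fun v ↦ h (x, v)) M x
    (by rw [hdim]; exact hM x)
  rwa [hdim, japaneseBracket_real] at hbound
end
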